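/- arXiv:1506.07832 — 4 statements merged into one kernel-verified Lean document; each statement's English description precedes it below -/
import Mathlib

section
/- Let G be a finite group and β a 2-cocycle on G with values in kˣ whose cohomology class is distinguished, i.e. every conjugacy class of G is β-regular. If moreover β satisfies β(g,x)·β(gx,g⁻¹)·β(g,g⁻¹)⁻¹ = 1 for all g,x ∈ G, then β(g,x) = β(gxg⁻¹, g) for all g,x ∈ G. -/
theorem stmt2 {k : Type*} [Field k] [IsAlgClosed k] [CharZero k]
    {G : Type*} [Group G] [Fintype G]
    (β : G → G → kˣ)
    (hcoc : ∀ g h l : G, β g h * β (g * h) l = β h l * β g (h * l))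
    (hβ1 : ∀ g : G, β 1 g = 1) (hβ1' : ∀ g : G, β g 1 = 1)
    (hreg : ∀ x g : G, g * x = x * g → β g x = β x g)
    (hH : ∀ g x : G, β g x * β (g * x) g⁻¹ * (β g g⁻¹)⁻¹ = 1) :
    ∀ g x : G, β g x = β (g * x * g⁻¹) g := by
  intro g x
  have hh : β g x * β (g * x) g⁻¹ = β g g⁻¹ := by
    have := hH g x
    rwa [mul_inv_eq_one] at this
  have e1 : β x g⁻¹ * β g (x * g⁻¹) = β g g⁻¹ := by
    rw [← hcoc g x g⁻¹, hh]
  have e2 : β (x * g⁻¹) g * β x g⁻¹ = β g g⁻¹ := by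
    have h2 := hcoc (x * g⁻¹) g g⁻¹
    simpa [mul_assoc, hβ1'] using h2
  have key : β g (x * g⁻¹) = β (x * g⁻¹) g := by
    have : β x g⁻¹ * β g (x * g⁻¹) = β x g⁻¹ * β (x * g⁻¹) g := by
      rw [e1, ← e2, mul_comm]
    exact mul_left_cancel this
  have h3 := hcoc g (x * g⁻¹) g
  rw [key] at h3
  have h3' : β (x * g⁻¹) g * β (g * (x * g⁻¹)) g = β (x * g⁻¹) g * β g x := by
    simpa [mul_assoc] using h3
  have := mul_left_cancel h3'
  rw [← this]
  group
end

section
/- Let N be a finite abelian group and μ : N × N → kˣ a 2-cocycle such that the associated form b_μ(a,c) = μ(a,c)μ(c,a)⁻¹ is non-degenerate (the induced map b : N → Hom(N,kˣ) is bijective). Then for any finite group G containing N as a central subgroup, the map a : Hom(Z(G),kˣ)-restriction composed with b⁻¹, i.e. a(χ) := b⁻¹(χ|_N), is a group homomorphism from the character group of Z(G) to Z(G) with image N, and it satisfies χ(a(χ')) · χ'(a(χ)) = 1 for all characters χ, χ' (i.e. a is alternating) whenever b_μ itself is alternating. -/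
/-- For a finite commutative group `A`, the character group `A →* kˣ` has the same
cardinality as `A`, when `k` is algebraically closed of characteristic zero. -/
lemma charGroup_card_eq {k : Type*} [Field k] [IsAlgClosed k] [CharZero k]
    (A : Type*) [CommGroup A] [Finite A] : Nat.card (A →* kˣ) = Nat.card A := by
  have : NeZero ((Monoid.exponent A : k)) :=
    ⟨Nat.cast_ne_zero.mpr (Monoid.exponent_ne_zero_of_finite (G := A))⟩
  exact Nat.card_congr (CommGroup.monoidHom_mulEquiv_of_hasEnoughRootsOfUnity A k).some.toEquiv

lemma charGroup_finite {k : Type*} [Field k] [IsAlgClosed k] [CharZero k]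
    (A : Type*) [CommGroup A] [Finite A] : Finite (A →* kˣ) := by
  have : NeZero ((Monoid.exponent A : k)) :=
    ⟨Nat.cast_ne_zero.mpr (Monoid.exponent_ne_zero_of_finite (G := A))⟩
  exact Finite.of_equiv A
    (CommGroup.monoidHom_mulEquiv_of_hasEnoughRootsOfUnity A k).some.toEquiv.symm

/-- Characters of a subgroup of a finite commutative group extend to the whole group. -/
lemma charRestrict_surjective {k : Type*} [Field k] [IsAlgClosed k] [CharZero k]
    {Z : Type*} [CommGroup Z] [Finite Z] (H : Subgroup Z) (f : H →* kˣ) :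
    ∃ χ : Z →* kˣ, χ.comp H.subtype = f := by
  have : Finite (Z →* kˣ) := charGroup_finite Z
  have : Finite (H →* kˣ) := charGroup_finite H
  have : Finite ((Z ⧸ H) →* kˣ) := charGroup_finite (Z ⧸ H)
  let res : (Z →* kˣ) →* (H →* kˣ) :=
    { toFun := fun χ => χ.comp H.subtype
      map_one' := MonoidHom.one_comp _
      map_mul' := fun χ χ' => MonoidHom.mul_comp χ χ' _ }
  -- bound the kernel
  have hmem : ∀ χ : res.ker, ∀ x ∈ H, (χ : Z →* kˣ) x = 1 := by
    intro χ x hx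
    have h := χ.2
    rw [MonoidHom.mem_ker] at h
    have := DFunLike.congr_fun h (⟨x, hx⟩ : H)
    exact this
  have hker : Nat.card res.ker ≤ Nat.card (Z ⧸ H) := by
    have hinj : Function.Injective
        (fun χ : res.ker => QuotientGroup.lift H (χ : Z →* kˣ) (hmem χ)) := by
      intro χ χ' h
      ext1
      ext x
      have := DFunLike.congr_fun h (QuotientGroup.mk x)
      simp only [QuotientGroup.lift_mk] at this
      exact congrArg Units.val this
    calc Nat.card res.ker ≤ Nat.card ((Z ⧸ H) →* kˣ) := Nat.card_le_card_of_injective _ hinj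
      _ = Nat.card (Z ⧸ H) := charGroup_card_eq _
  -- counting
  have h1 : Nat.card (Z →* kˣ) = Nat.card res.range * Nat.card res.ker := by
    rw [Subgroup.card_eq_card_quotient_mul_card_subgroup res.ker]
    congr 1
    exact Nat.card_congr (QuotientGroup.quotientKerEquivRange res).toEquiv
  have h2 : Nat.card Z = Nat.card (Z ⧸ H) * Nat.card H :=
    Subgroup.card_eq_card_quotient_mul_card_subgroup H
  have : Nonempty res.ker := ⟨1⟩
  have hkpos : 0 < Nat.card res.ker := Nat.card_pos
  have hge : Nat.card (H →* kˣ) ≤ Nat.card res.range := by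
    refine Nat.le_of_mul_le_mul_right ?_ hkpos
    calc Nat.card (H →* kˣ) * Nat.card res.ker
        = Nat.card H * Nat.card res.ker := by rw [charGroup_card_eq]
      _ ≤ Nat.card H * Nat.card (Z ⧸ H) := Nat.mul_le_mul_left _ hker
      _ = Nat.card Z := by rw [h2, Nat.mul_comm]
      _ = Nat.card (Z →* kˣ) := (charGroup_card_eq Z).symm
      _ = Nat.card res.range * Nat.card res.ker := h1
  have htop : res.range = ⊤ := by
    apply Subgroup.eq_top_of_card_eq
    exact le_antisymm (Subgroup.card_le_card_group _) hge
  have : f ∈ res.range := htop ▸ Subgroup.mem_top f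
  obtain ⟨χ, hχ⟩ := this
  exact ⟨χ, hχ⟩

theorem stmt12 {k : Type*} [Field k] [IsAlgClosed k] [CharZero k]
    {G : Type*} [Group G] [Fintype G]
    (N : Subgroup G) (hN : N ≤ Subgroup.center G)
    (μ : N → N → kˣ)
    (hcoc : ∀ x y z : N, μ x y * μ (x * y) z = μ y z * μ x (y * z))
    (h1 : ∀ x : N, μ 1 x = 1) (h1' : ∀ x : N, μ x 1 = 1)
    (b : N → (N →* kˣ))
    (hb : ∀ x y : N, b x y = μ x y * (μ y x)⁻¹)
    (hbij : Function.Bijective b)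
    (hanti : ∀ x y : N, b x y * b y x = 1)
    (halt : ∀ x : N, b x x = 1)
    (a : ((Subgroup.center G) →* kˣ) → N)
    (ha : ∀ χ : (Subgroup.center G) →* kˣ,
      b (a χ) = χ.comp (Subgroup.inclusion hN)) :
    (∀ χ χ' : (Subgroup.center G) →* kˣ, a (χ * χ') = a χ * a χ') ∧
    (∀ x : N, ∃ χ, a χ = x) ∧
    (∀ χ χ' : (Subgroup.center G) →* kˣ,
      χ (Subgroup.inclusion hN (a χ')) * χ' (Subgroup.inclusion hN (a χ)) = 1) := by
  -- `b` is multiplicative in its first argument (using antisymmetry)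
  have hinv : ∀ x y : N, b x y = (b y x)⁻¹ := fun x y =>
    eq_inv_of_mul_eq_one_left (by rw [mul_comm]; exact hanti y x)
  have hmul : ∀ x y : N, b (x * y) = b x * b y := by
    intro x y
    ext z
    rw [MonoidHom.mul_apply, hinv (x * y) z, map_mul, mul_inv, ← hinv x z, ← hinv y z]
  refine ⟨?_, ?_, ?_⟩
  · -- a is a homomorphism
    intro χ χ'
    apply hbij.injective
    rw [hmul, ha, ha, ha, MonoidHom.mul_comp]
  · -- a is surjective onto N
    intro x
    have : Finite (Subgroup.center G) := Subtype.finite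
    -- transfer `b x` to a character of `N.subgroupOf (center G)`
    let e : (N.subgroupOf (Subgroup.center G)) ≃* N := Subgroup.subgroupOfEquivOfLe hN
    open scoped IsMulCommutative in
    obtain ⟨χ, hχ⟩ := charRestrict_surjective (Z := Subgroup.center G) (N.subgroupOf (Subgroup.center G))
      ((b x).comp e.toMonoidHom)
    refine ⟨χ, hbij.injective ?_⟩
    rw [ha]
    ext y
    have key : (Subgroup.inclusion hN y) =
        (N.subgroupOf (Subgroup.center G)).subtype (e.symm y) := rfl
    rw [MonoidHom.comp_apply, key, ← MonoidHom.comp_apply, hχ]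
    simp
  · -- alternating property
    intro χ χ'
    have e1 : χ (Subgroup.inclusion hN (a χ')) = b (a χ) (a χ') := by
      rw [ha χ]; rfl
    have e2 : χ' (Subgroup.inclusion hN (a χ)) = b (a χ') (a χ) := by
      rw [ha χ']; rfl
    rw [e1, e2, hanti]
end

section
/- Let G be a finite group and b : G → Hom(G,kˣ) a function satisfying b(g)(h) = β(h,g)β(hgh⁻¹,h)⁻¹ for some 2-cocycle β with β(g,h) = β(tgt⁻¹, tht⁻¹) for all t (conjugation invariant). Then b(g) is a character of G vanishing on commutators, and b factors through the abelianization: b(g)(h) depends only on the images of g and h in G_ab. -/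
theorem stmt13 {k : Type*} [Field k] [IsAlgClosed k] [CharZero k]
    {G : Type*} [Group G] [Fintype G]
    (β : G → G → kˣ)
    (hcoc : ∀ g h l : G, β g h * β (g * h) l = β h l * β g (h * l))
    (hβ1 : ∀ g : G, β 1 g = 1) (hβ1' : ∀ g : G, β g 1 = 1)
    (hinv : ∀ g h t : G, β g h = β (t⁻¹ * g * t) (t⁻¹ * h * t))
    (b : G → G → kˣ)
    (hb : ∀ g h : G, b g h = β h g * (β (h * g * h⁻¹) h)⁻¹) :
    (∀ g h h' : G, b g (h * h') = b g h * b g h') ∧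
    (∀ g g' h h' : G, Abelianization.of g = Abelianization.of g' →
      Abelianization.of h = Abelianization.of h' → b g h = b g' h') := by
  -- conjugation invariance in the convenient form
  have hconjg : ∀ x y t : G, β (t * x * t⁻¹) (t * y * t⁻¹) = β x y := by
    intro x y t
    rw [hinv (t * x * t⁻¹) (t * y * t⁻¹) t]
    congr 1 <;> group
  have hc1 : ∀ x t : G, β (t * x * t⁻¹) t = β x t := by
    intro x t
    have h1 := hconjg x t t
    have e : t * t * t⁻¹ = t := by group
    rw [e] at h1
    exact h1
  -- b g h = β h g / β g h
  have hb' : ∀ g h : G, b g h = β h g * (β g h)⁻¹ := by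
    intro g h
    rw [hb g h, hc1 g h]
  -- key identity at the level of k
  have tk : ∀ g h h' : G,
      (↑(β g (h * h')) : k) * ↑(β h g) * ↑(β h' g)
        = ↑(β g h) * ↑(β g h') * ↑(β (h * h') g) := by
    intro g h h'
    -- three cocycle instances
    have e1u : β h g * β (g * h) h' = β g h' * β (g * h * g⁻¹) (g * h') := by
      have h1 := hcoc (g * h * g⁻¹) g h'
      have e : g * h * g⁻¹ * g = g * h := by group
      rw [e, hc1 h g] at h1
      exact h1
    have e2u : β h h' * β (h * h') g = β h' g * β (g * h * g⁻¹) (g * h') := by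
      have h1 := hcoc (g * h * g⁻¹) (g * h' * g⁻¹) g
      have e : g * h * g⁻¹ * (g * h' * g⁻¹) = g * (h * h') * g⁻¹ := by group
      have e' : g * h' * g⁻¹ * g = g * h' := by group
      rw [e, e', hconjg h h' g, hc1 (h * h') g, hc1 h' g] at h1
      exact h1
    have e3u := hcoc g h h'
    have e1 : (↑(β h g) : k) * ↑(β (g * h) h')
        = ↑(β g h') * ↑(β (g * h * g⁻¹) (g * h')) := by exact_mod_cast congrArg Units.val e1u
    have e2 : (↑(β h h') : k) * ↑(β (h * h') g)
        = ↑(β h' g) * ↑(β (g * h * g⁻¹) (g * h')) := by exact_mod_cast congrArg Units.val e2u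
    have e3 : (↑(β g h) : k) * ↑(β (g * h) h')
        = ↑(β h h') * ↑(β g (h * h')) := by exact_mod_cast congrArg Units.val e3u
    have big : (↑(β h h') : k) * ((↑(β g (h * h')) : k) * ↑(β h g) * ↑(β h' g))
        = ↑(β h h') * ((↑(β g h) : k) * ↑(β g h') * ↑(β (h * h') g)) := by
      linear_combination (↑(β g h) * ↑(β h' g) : k) * e1
        - (↑(β g h) * ↑(β g h') : k) * e2 - (↑(β h g) * ↑(β h' g) : k) * e3
    exact mul_left_cancel₀ (Units.ne_zero (β h h')) big
  -- b at the level of k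
  have hbk : ∀ g h : G, (↑(b g h) : k) * ↑(β g h) = ↑(β h g) := by
    intro g h
    have u : b g h * β g h = β h g := by rw [hb' g h, inv_mul_cancel_right]
    exact_mod_cast congrArg Units.val u
  -- multiplicativity in the second variable
  have mult2 : ∀ g h h' : G, b g (h * h') = b g h * b g h' := by
    intro g h h'
    have k1 := hbk g h
    have k2 := hbk g h'
    have k3 := hbk g (h * h')
    have t := tk g h h'
    have cancel : (↑(b g (h * h')) : k) * (↑(β g (h * h')) * ↑(β g h) * ↑(β g h'))
        = (↑(b g h) * ↑(b g h')) * (↑(β g (h * h')) * ↑(β g h) * ↑(β g h')) := by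
      linear_combination (↑(β g h) * ↑(β g h') : k) * k3
        - (↑(b g h') * ↑(β g (h * h')) * ↑(β g h') : k) * k1
        - (↑(β g (h * h')) * ↑(β h g) : k) * k2 - t
    have hne : (↑(β g (h * h')) : k) * ↑(β g h) * ↑(β g h') ≠ 0 :=
      mul_ne_zero (mul_ne_zero (Units.ne_zero _) (Units.ne_zero _)) (Units.ne_zero _)
    have hv := mul_right_cancel₀ hne cancel
    exact Units.ext (by rw [Units.val_mul]; exact hv)
  -- multiplicativity in the first variable
  have mult1 : ∀ g g' h : G, b (g * g') h = b g h * b g' h := by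
    intro g g' h
    have k1 := hbk g h
    have k2 := hbk g' h
    have k3 := hbk (g * g') h
    have t := tk h g g'
    have cancel : (↑(b (g * g')  h) : k) * (↑(β (g * g') h) * ↑(β g h) * ↑(β g' h))
        = (↑(b g h) * ↑(b g' h)) * (↑(β (g * g') h) * ↑(β g h) * ↑(β g' h)) := by
      linear_combination (↑(β g h) * ↑(β g' h) : k) * k3
        - (↑(b g' h) * ↑(β (g * g') h) * ↑(β g' h) : k) * k1
        - (↑(β (g * g') h) * ↑(β h g) : k) * k2 + t
    have hne : (↑(β (g * g') h) : k) * ↑(β g h) * ↑(β g' h) ≠ 0 :=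
      mul_ne_zero (mul_ne_zero (Units.ne_zero _) (Units.ne_zero _)) (Units.ne_zero _)
    have hv := mul_right_cancel₀ hne cancel
    exact Units.ext (by rw [Units.val_mul]; exact hv)
  have hb1 : ∀ h : G, b 1 h = 1 := by
    intro h
    rw [hb' 1 h, hβ1 h, hβ1' h]
    simp
  have hb1' : ∀ g : G, b g 1 = 1 := by
    intro g
    rw [hb' g 1, hβ1 g, hβ1' g]
    simp
  refine ⟨mult2, ?_⟩
  intro g g' h h' hg hh
  -- factor through the abelianization in each variable
  let F : G →* kˣ :=
    { toFun := fun x => b x h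
      map_one' := hb1 h
      map_mul' := fun x y => mult1 x y h }
  have h1 : b g h = b g' h := by
    have := congrArg (Abelianization.lift F) hg
    simpa [F] using this
  let F' : G →* kˣ :=
    { toFun := fun y => b g' y
      map_one' := hb1' g'
      map_mul' := fun x y => mult2 g' x y }
  have h2 : b g' h = b g' h' := by
    have := congrArg (Abelianization.lift F') hh
    simpa [F'] using this
  exact h1.trans h2
end

section
/- Let G be a finite group and σ a map from pairs of elements of the character-group side such that β_σ(g,h) := σ(g,h) defines a conjugation-invariant 2-cocycle on G satisfying σ(g, g⁻¹hg) = σ(h,g) for all g,h ∈ G. Then every conjugacy class of G is β_σ-regular and hence the class [β_σ] is distinguished; conversely, if [β] is distinguished there is a representative β with β(g,x) = β(gxg⁻¹,g) for all g,x. -/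
theorem stmt19 {k : Type*} [Field k] [IsAlgClosed k] [CharZero k]
    {G : Type*} [Group G] [Fintype G]
    (β : G → G → kˣ)
    (hcoc : ∀ g h l : G, β g h * β (g * h) l = β h l * β g (h * l))
    (hβ1 : ∀ g : G, β 1 g = 1) (hβ1' : ∀ g : G, β g 1 = 1)
    (hinv : ∀ g h t : G, β g h = β (t⁻¹ * g * t) (t⁻¹ * h * t)) :
    ((∀ g h : G, β g (g⁻¹ * h * g) = β h g) →
      ∀ x g : G, Commute g x → β g x = β x g) ∧
    ((∀ x g : G, Commute g x → β g x = β x g) →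
      ∃ η : G → kˣ, η 1 = 1 ∧
        ∀ g x : G,
          η g * η x * (η (g * x))⁻¹ * β g x
            = η (g * x * g⁻¹) * η g * (η (g * x * g⁻¹ * g))⁻¹ * β (g * x * g⁻¹) g) := by
  classical
  -- a helper to prove equalities of units via the field
  have unit_eq : ∀ a b : kˣ, (a : k) = (b : k) → a = b := fun a b h => Units.ext h
  constructor
  · intro H x g hc
    have hx : g⁻¹ * x * g = x := by
      rw [mul_assoc, ← hc.eq, ← mul_assoc, inv_mul_cancel, one_mul]
    rw [← H g x, hx]
  · intro hreg
    -- conjugation-swap identity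
    have hswap : ∀ (a x : G), β (a * x * a⁻¹) a = β x a := by
      intro a x
      rw [hinv (a * x * a⁻¹) a a]
      congr 1 <;> group
    set f : G → G → kˣ := fun g x => β g x * (β x g)⁻¹ with hf
    -- composition identity
    have comp : ∀ g h x : G, f (g * h) x = f g (h * x * h⁻¹) * f h x := by
      intro g h x
      set y := h * x * h⁻¹ with hy
      set z := g * h * x * (g * h)⁻¹ with hz
      have hA : β (g * h) x = (β g h)⁻¹ * (β h x * β g (h * x)) := by
        rw [← hcoc g h x]; group
      have hB : β g (h * x) = (β y h)⁻¹ * (β g y * β (z * g) h) := by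
        have e2 := hcoc g y h
        have h1 : g * y = z * g := by rw [hy, hz]; group
        have h2 : y * h = h * x := by rw [hy]; group
        rw [h1, h2] at e2
        rw [eq_inv_mul_iff_mul_eq]
        exact e2.symm
      have hC : β (z * g) h = (β z g)⁻¹ * (β g h * β z (g * h)) := by
        rw [← hcoc z g h]; group
      have s1 : β z (g * h) = β x (g * h) := by
        rw [← hswap (g * h) x]
      have s2 : β z g = β y g := by
        rw [← hswap g y]; congr 1; rw [hy, hz]; try group
      have s3 : β y h = β x h := by
        rw [← hswap h x]
      show β (g * h) x * (β x (g * h))⁻¹ = (β g y * (β y g)⁻¹) * (β h x * (β x h)⁻¹)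
      rw [hA, hB, hC, s1, s2, s3]
      apply unit_eq
      simp only [Units.val_mul, Units.val_inv_eq_inv_val]
      field_simp
    have freg : ∀ b x : G, b * x = x * b → f b x = 1 := by
      intro b x h
      show β b x * (β x b)⁻¹ = 1
      rw [hreg x b h, mul_inv_cancel]
    -- representatives and conjugators
    let rep : G → G := fun y => (ConjClasses.mk y).out
    have hrep : ∀ y, IsConj (rep y) y := by
      intro y
      rw [← ConjClasses.mk_eq_mk_iff_isConj]
      exact Quotient.out_eq _
    have hex : ∀ y : G, ∃ c : G, c * rep y * c⁻¹ = y := fun y => isConj_iff.mp (hrep y)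
    choose cj hcj using hex
    set η : G → kˣ := fun y => f (cj y) (rep y) with hη
    have hrepconj : ∀ g x : G, rep (g * x * g⁻¹) = rep x := by
      intro g x
      show (ConjClasses.mk (g * x * g⁻¹)).out = (ConjClasses.mk x).out
      congr 1
      refine ConjClasses.mk_eq_mk_iff_isConj.mpr ?_
      exact (isConj_iff.mpr ⟨g, rfl⟩).symm
    -- the key transformation law
    have hkey : ∀ g x : G, f g x * η x = η (g * x * g⁻¹) := by
      intro g x
      set x₀ := rep x with hx₀
      set c := cj x with hc
      set c' := cj (g * x * g⁻¹) with hc'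
      have h1 : c * x₀ * c⁻¹ = x := hcj x
      have h2 : c' * x₀ * c'⁻¹ = g * x * g⁻¹ := by
        have := hcj (g * x * g⁻¹)
        rwa [hrepconj g x] at this
      set b := c'⁻¹ * (g * c) with hb
      have hbx : b * x₀ = x₀ * b := by
        have h3 : (g * c) * x₀ * (g * c)⁻¹ = c' * x₀ * c'⁻¹ := by
          rw [h2, ← h1]; group
        have h4 : b * x₀ * b⁻¹ = x₀ := by
          rw [hb]
          have : c'⁻¹ * (g * c) * x₀ * (c'⁻¹ * (g * c))⁻¹
              = c'⁻¹ * ((g * c) * x₀ * (g * c)⁻¹) * c' := by group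
          rw [this, h3]; group
        calc b * x₀ = (b * x₀ * b⁻¹) * b := by group
          _ = x₀ * b := by rw [h4]
      have hcb : c' * b = g * c := by rw [hb]; group
      have e1 : f (g * c) x₀ = f g x * η x := by
        rw [comp g c x₀, h1]; try rfl
      have e2 : f (g * c) x₀ = η (g * x * g⁻¹) := by
        rw [← hcb, comp c' b x₀]
        have hb2 : b * x₀ * b⁻¹ = x₀ := by
          rw [hbx]; group
        rw [hb2, freg b x₀ hbx, mul_one]
        show f c' x₀ = η (g * x * g⁻¹)
        rw [hη]
        simp only
        rw [hrepconj g x]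
      rw [← e1, e2]
    refine ⟨η, ?_, ?_⟩
    · have h1 : rep (1 : G) = 1 := isConj_one_left.mp (hrep 1)
      show f (cj 1) (rep 1) = 1
      rw [h1]
      show β (cj 1) 1 * (β 1 (cj 1))⁻¹ = 1
      rw [hβ1, hβ1', inv_one, mul_one]
    · intro g x
      have hgx : g * x * g⁻¹ * g = g * x := by group
      have hkx := hkey g x
      have hsw : β (g * x * g⁻¹) g = β x g := hswap g x
      rw [hgx, hsw]
      -- reduce to η x * β g x = η (g*x*g⁻¹) * β x g
      have main : η x * β g x = η (g * x * g⁻¹) * β x g := by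
        have : (β g x * (β x g)⁻¹) * η x = η (g * x * g⁻¹) := hkx
        apply unit_eq
        have := congrArg Units.val this
        simp only [Units.val_mul, Units.val_inv_eq_inv_val] at this ⊢
        field_simp at this ⊢
        linear_combination this
      apply unit_eq
      have := congrArg Units.val main
      simp only [Units.val_mul, Units.val_inv_eq_inv_val] at this ⊢
      field_simp at this ⊢
      linear_combination this
end
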